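/- Let S ⊆ [m] × [n] with G_S doubly chordal bipartite, fix a column j₀, and let D_α, D_β be maximal cliques of S intersecting column j₀ (so they are induced by blocks of j₀). Order these cliques by D_α ≤ D_β iff rows(D_α) ⊆ rows(D_β), where rows is taken within the nonzero rows of column j₀. Then D_α ∩ D_β is maximal among all pairwise intersections of maximal cliques of S if and only if D_α covers D_β or D_β covers D_α in this poset. -/
import Mathlib


open Finset

open scoped Classical

/-- The bipartite graph associated to `S ⊆ [m] × [n]`. -/
def qiGraph (m n : ℕ) (S : Finset (Fin m × Fin n)) : SimpleGraph (Fin m ⊕ Fin n) :=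
  SimpleGraph.fromRel (fun a b =>
    ∃ p : Fin m × Fin n, p ∈ S ∧ a = Sum.inl p.1 ∧ b = Sum.inr p.2)

/-- A chord of a closed walk: an edge of `G` between vertices of the walk that is not
an edge of the walk. -/
def IsChord {V : Type*} (G : SimpleGraph V) {v : V} (c : G.Walk v v) (e : Sym2 V) : Prop :=
  e ∈ G.edgeSet ∧ e ∉ c.edges ∧ ∀ x ∈ e, x ∈ c.support

/-- Every cycle of length at least 6 has at least one chord. -/
def ChordalBipartite {V : Type*} (G : SimpleGraph V) : Prop :=
  ∀ (v : V) (c : G.Walk v v), c.IsCycle → 6 ≤ c.length → ∃ e : Sym2 V, IsChord G c e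

/-- Every cycle of length at least 6 has at least two chords. -/
def DoublyChordalBipartite {V : Type*} (G : SimpleGraph V) : Prop :=
  ∀ (v : V) (c : G.Walk v v), c.IsCycle → 6 ≤ c.length →
    ∃ e₁ e₂ : Sym2 V, e₁ ≠ e₂ ∧ IsChord G c e₁ ∧ IsChord G c e₂

variable {m n : ℕ}

/-- A (nonempty) clique in `S`: a subset of `S` of the form `R × T`. -/
def IsGridClique (S C : Finset (Fin m × Fin n)) : Prop :=
  C.Nonempty ∧ C ⊆ S ∧ ∀ p ∈ C, ∀ q ∈ C, (p.1, q.2) ∈ C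

/-- A maximal clique in `S`. -/
def IsMaxClique (S C : Finset (Fin m × Fin n)) : Prop :=
  IsGridClique S C ∧ ∀ C', IsGridClique S C' → C ⊆ C' → C = C'

/-- `Max(S)`: the set of maximal cliques of `S`. -/
noncomputable def maxCliques (S : Finset (Fin m × Fin n)) : Finset (Finset (Fin m × Fin n)) :=
  S.powerset.filter (IsMaxClique S)

/-- `Max(x)`: maximal cliques containing the index `x`. -/
noncomputable def maxCliquesAt (S : Finset (Fin m × Fin n)) (x : Fin m × Fin n) :
    Finset (Finset (Fin m × Fin n)) :=
  (maxCliques S).filter (fun D => x ∈ D)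

/-- Pairwise intersections of distinct maximal cliques of `S`. -/
noncomputable def pairInts (S : Finset (Fin m × Fin n)) : Finset (Finset (Fin m × Fin n)) :=
  ((maxCliques S ×ˢ maxCliques S).filter (fun P => P.1 ≠ P.2)).image (fun P => P.1 ∩ P.2)

/-- `Int(S)`: containment-maximal pairwise intersections of maximal cliques of `S`. -/
noncomputable def maxInts (S : Finset (Fin m × Fin n)) : Finset (Finset (Fin m × Fin n)) :=
  (pairInts S).filter (fun C => ∀ C' ∈ pairInts S, C ⊆ C' → C = C')

/-- Pairwise intersections of distinct elements of `Max(x)`. -/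
noncomputable def pairIntsAt (S : Finset (Fin m × Fin n)) (x : Fin m × Fin n) :
    Finset (Finset (Fin m × Fin n)) :=
  ((maxCliquesAt S x ×ˢ maxCliquesAt S x).filter (fun P => P.1 ≠ P.2)).image
    (fun P => P.1 ∩ P.2)

/-- `Int(x)`: containment-maximal pairwise intersections of elements of `Max(x)`. -/
noncomputable def maxIntsAt (S : Finset (Fin m × Fin n)) (x : Fin m × Fin n) :
    Finset (Finset (Fin m × Fin n)) :=
  (pairIntsAt S x).filter (fun C => ∀ C' ∈ pairIntsAt S x, C ⊆ C' → C = C')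

/-- The rows of column `j` that are also nonzero rows of column `j₀`. -/
noncomputable def colRows (S : Finset (Fin m × Fin n)) (j₀ j : Fin n) : Finset (Fin m) :=
  Finset.univ.filter (fun i => (i, j) ∈ S ∧ (i, j₀) ∈ S)

/-- The clique induced by the block (w.r.t. column `j₀`) of the column `j`. -/
noncomputable def inducedClique (S : Finset (Fin m × Fin n)) (j₀ j : Fin n) :
    Finset (Fin m × Fin n) :=
  Finset.univ.filter (fun p => p.1 ∈ colRows S j₀ j ∧ colRows S j₀ j ⊆ colRows S j₀ p.2)

/-- The row indices of a subset of `S`. -/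
noncomputable def rowsOf (D : Finset (Fin m × Fin n)) : Finset (Fin m) := D.image Prod.fst

/-- An element of the poset `P(j₀)`: a maximal clique of `S` meeting column `j₀`. -/
def PNode (S : Finset (Fin m × Fin n)) (j₀ : Fin n) (D : Finset (Fin m × Fin n)) : Prop :=
  IsMaxClique S D ∧ ∃ i, (i, j₀) ∈ D

/-- `PCovers S j₀ Dβ Dα` means `Dα ⋖ Dβ` in the poset `P(j₀)` (ordered by
containment of row sets). -/
def PCovers (S : Finset (Fin m × Fin n)) (j₀ : Fin n) (Dβ Dα : Finset (Fin m × Fin n)) : Prop :=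
  PNode S j₀ Dα ∧ PNode S j₀ Dβ ∧ rowsOf Dα ⊂ rowsOf Dβ ∧
    ¬ ∃ Dγ, PNode S j₀ Dγ ∧ rowsOf Dα ⊂ rowsOf Dγ ∧ rowsOf Dγ ⊂ rowsOf Dβ

/-- `C⁺`: the sum of the entries of `u` indexed by `C`. -/
def cliqueSum (u : Fin m × Fin n → ℝ) (C : Finset (Fin m × Fin n)) : ℝ := ∑ x ∈ C, u x

/-- `u_{i+}`: the `i`-th row marginal of `u` over `S`. -/
noncomputable def rowMarg (S : Finset (Fin m × Fin n)) (u : Fin m × Fin n → ℝ) (i : Fin m) : ℝ :=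
  ∑ x ∈ S.filter (fun x => x.1 = i), u x

/-- `u_{+j}`: the `j`-th column marginal of `u` over `S`. -/
noncomputable def colMarg (S : Finset (Fin m × Fin n)) (u : Fin m × Fin n → ℝ) (j : Fin n) : ℝ :=
  ∑ x ∈ S.filter (fun x => x.2 = j), u x

/-- `u_{++}`: the total sum of `u` over `S`. -/
def totalSum (S : Finset (Fin m × Fin n)) (u : Fin m × Fin n → ℝ) : ℝ := ∑ x ∈ S, u x

/-! ### Auxiliary lemmas for the main theorem -/

section Aux

variable {C D E F Dα Dβ Dγ : Finset (Fin m × Fin n)} {S : Finset (Fin m × Fin n)} {j₀ : Fin n}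

lemma qi_adj {i : Fin m} {j : Fin n} (h : (i, j) ∈ S) :
    (qiGraph m n S).Adj (Sum.inl i) (Sum.inr j) := by
  rw [qiGraph, SimpleGraph.fromRel_adj]
  exact ⟨by simp, Or.inl ⟨(i, j), h, rfl, rfl⟩⟩

lemma qi_adj_iff {i : Fin m} {j : Fin n} :
    (qiGraph m n S).Adj (Sum.inl i) (Sum.inr j) ↔ (i, j) ∈ S := by
  constructor
  · rw [qiGraph, SimpleGraph.fromRel_adj]
    rintro ⟨-, (⟨p, hp, h1, h2⟩ | ⟨p, hp, h1, h2⟩)⟩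
    · obtain rfl : p.1 = i := by simpa using h1.symm
      obtain rfl : p.2 = j := by simpa using h2.symm
      simpa using hp
    · simp at h1
  · exact qi_adj

lemma qi_not_adj_ll (a b : Fin m) : ¬ (qiGraph m n S).Adj (Sum.inl a) (Sum.inl b) := by
  rw [qiGraph, SimpleGraph.fromRel_adj]
  rintro ⟨-, (⟨p, hp, h1, h2⟩ | ⟨p, hp, h1, h2⟩)⟩ <;> simp at h2

lemma qi_not_adj_rr (a b : Fin n) : ¬ (qiGraph m n S).Adj (Sum.inr a) (Sum.inr b) := by
  rw [qiGraph, SimpleGraph.fromRel_adj]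
  rintro ⟨-, (⟨p, hp, h1, h2⟩ | ⟨p, hp, h1, h2⟩)⟩ <;> simp at h1

lemma six_cycle_contradiction
    (hS : DoublyChordalBipartite (qiGraph m n S))
    {i₀ i₁ i₂ : Fin m} {j₀ j₁ j₂ : Fin n}
    (h10 : (i₁, j₀) ∈ S) (h20 : (i₂, j₀) ∈ S) (h22 : (i₂, j₂) ∈ S)
    (h02 : (i₀, j₂) ∈ S) (h01 : (i₀, j₁) ∈ S) (h11 : (i₁, j₁) ∈ S)
    (h12 : (i₁, j₂) ∉ S) (h21 : (i₂, j₁) ∉ S) : False := by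
  have hi01 : i₀ ≠ i₁ := fun h => h12 (h ▸ h02)
  have hi02 : i₀ ≠ i₂ := fun h => h21 (h ▸ h01)
  have hi12 : i₁ ≠ i₂ := fun h => h21 (h ▸ h11)
  have hj01 : j₀ ≠ j₁ := fun h => h21 (h ▸ h20)
  have hj02 : j₀ ≠ j₂ := fun h => h12 (h ▸ h10)
  have hj12 : j₁ ≠ j₂ := fun h => h21 (h ▸ h22)
  set G := qiGraph m n S
  let c : G.Walk (Sum.inl i₁) (Sum.inl i₁) :=
    (qi_adj h10).toWalk.append <| ((qi_adj h20).symm.toWalk.append <|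
      ((qi_adj h22).toWalk.append <| ((qi_adj h02).symm.toWalk.append <|
        ((qi_adj h01).toWalk.append ((qi_adj h11).symm.toWalk)))))
  have hsupp : c.support = [Sum.inl i₁, Sum.inr j₀, Sum.inl i₂, Sum.inr j₂,
      Sum.inl i₀, Sum.inr j₁, Sum.inl i₁] := by
    simp [c, SimpleGraph.Walk.support_append]
  have hedges : c.edges = [s(Sum.inl i₁, Sum.inr j₀), s(Sum.inr j₀, Sum.inl i₂),
      s(Sum.inl i₂, Sum.inr j₂), s(Sum.inr j₂, Sum.inl i₀), s(Sum.inl i₀, Sum.inr j₁),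
      s(Sum.inr j₁, Sum.inl i₁)] := by
    simp [c, SimpleGraph.Walk.edges_append]
  have hlen : c.length = 6 := by
    simp [c, SimpleGraph.Walk.length_append]
  have hcyc : c.IsCycle := by
    rw [SimpleGraph.Walk.isCycle_def]
    refine ⟨?_, ?_, ?_⟩
    · rw [SimpleGraph.Walk.isTrail_def, hedges]
      simp [Sym2.eq_iff, hi01, hi02, hi12, hj01, hj02, hj12,
        hi01.symm, hi02.symm, hi12.symm, hj01.symm, hj02.symm, hj12.symm]
    · intro hnil
      have := congrArg SimpleGraph.Walk.length hnil
      simp [hlen] at this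
    · have htail : c.support.tail = [Sum.inr j₀, Sum.inl i₂, Sum.inr j₂,
          Sum.inl i₀, Sum.inr j₁, Sum.inl i₁] := by rw [hsupp]; rfl
      rw [htail]
      simp [hi01, hi02, hi12, hj01, hj02, hj12,
        hi01.symm, hi02.symm, hi12.symm, hj01.symm, hj02.symm, hj12.symm]
  obtain ⟨e₁, e₂, hne, hc1, hc2⟩ := hS _ c hcyc (by omega)
  have key : ∀ e, IsChord G c e → e = s(Sum.inl i₀, Sum.inr j₀) := by
    intro e he
    obtain ⟨hedge, hnot, hsup⟩ := he
    induction e using Sym2.ind with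
    | _ x y =>
      rw [SimpleGraph.mem_edgeSet] at hedge
      have main : ∀ (a : Fin m) (b : Fin n), (a, b) ∈ S →
          s(Sum.inl a, Sum.inr b) ∉ c.edges →
          Sum.inl a ∈ c.support → Sum.inr b ∈ c.support →
          s((Sum.inl a : Fin m ⊕ Fin n), Sum.inr b) = s(Sum.inl i₀, Sum.inr j₀) := by
        intro a b hab hnotc hsa hsb
        rw [hsupp] at hsa hsb
        simp only [List.mem_cons, List.not_mem_nil, or_false] at hsa hsb
        have ha : a = i₁ ∨ a = i₂ ∨ a = i₀ := by
          rcases hsa with h|h|h|h|h|h|h <;> simp_all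
        have hb : b = j₀ ∨ b = j₂ ∨ b = j₁ := by
          rcases hsb with h|h|h|h|h|h|h <;> simp_all
        rw [hedges] at hnotc
        simp only [List.mem_cons, List.not_mem_nil, or_false, not_or] at hnotc
        rcases ha with rfl|rfl|rfl <;> rcases hb with rfl|rfl|rfl
        · simp [Sym2.eq_iff] at hnotc
        · exact absurd hab h12
        · simp [Sym2.eq_iff] at hnotc
        · simp [Sym2.eq_iff] at hnotc
        · simp [Sym2.eq_iff] at hnotc
        · exact absurd hab h21
        · rfl
        · simp [Sym2.eq_iff] at hnotc
        · simp [Sym2.eq_iff] at hnotc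
      match x, y with
      | Sum.inl a, Sum.inr b =>
        exact main a b (qi_adj_iff.mp hedge) hnot (hsup _ (by simp)) (hsup _ (by simp))
      | Sum.inr b, Sum.inl a =>
        rw [Sym2.eq_swap] at hnot ⊢
        exact main a b (qi_adj_iff.mp hedge.symm) hnot
          (hsup _ (by simp)) (hsup _ (by simp))
      | Sum.inl a, Sum.inl a' => exact absurd hedge (qi_not_adj_ll a a')
      | Sum.inr b, Sum.inr b' => exact absurd hedge (qi_not_adj_rr b b')
  exact hne ((key _ hc1).trans (key _ hc2).symm)

/-- Column indices of a subset of the grid. -/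
noncomputable def colsOf (D : Finset (Fin m × Fin n)) : Finset (Fin n) := D.image Prod.snd

lemma mem_rowsOf {i : Fin m} : i ∈ rowsOf D ↔ ∃ j, (i, j) ∈ D := by
  simp only [rowsOf, mem_image]
  constructor
  · rintro ⟨⟨a, b⟩, h, rfl⟩; exact ⟨b, h⟩
  · rintro ⟨j, h⟩; exact ⟨(i, j), h, rfl⟩

lemma mem_colsOf {j : Fin n} : j ∈ colsOf D ↔ ∃ i, (i, j) ∈ D := by
  simp only [colsOf, mem_image]
  constructor
  · rintro ⟨⟨a, b⟩, h, rfl⟩; exact ⟨a, h⟩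
  · rintro ⟨i, h⟩; exact ⟨(i, j), h, rfl⟩

lemma clique_prod (h : IsGridClique S C) {i : Fin m} {j : Fin n}
    (hi : i ∈ rowsOf C) (hj : j ∈ colsOf C) : (i, j) ∈ C := by
  obtain ⟨j', hj'⟩ := mem_rowsOf.mp hi
  obtain ⟨i', hi'⟩ := mem_colsOf.mp hj
  exact h.2.2 _ hj' _ hi'

lemma mem_clique_iff (h : IsGridClique S C) {i : Fin m} {j : Fin n} :
    (i, j) ∈ C ↔ i ∈ rowsOf C ∧ j ∈ colsOf C :=
  ⟨fun hm => ⟨mem_rowsOf.mpr ⟨j, hm⟩, mem_colsOf.mpr ⟨i, hm⟩⟩,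
   fun ⟨h1, h2⟩ => clique_prod h h1 h2⟩

lemma rowsOf_nonempty (h : C.Nonempty) : (rowsOf C).Nonempty := by
  obtain ⟨⟨i, j⟩, hm⟩ := h; exact ⟨i, mem_rowsOf.mpr ⟨j, hm⟩⟩

lemma colsOf_nonempty (h : C.Nonempty) : (colsOf C).Nonempty := by
  obtain ⟨⟨i, j⟩, hm⟩ := h; exact ⟨j, mem_colsOf.mpr ⟨i, hm⟩⟩

lemma col_mem_iff (hD : IsMaxClique S D) {j : Fin n} :
    j ∈ colsOf D ↔ ∀ i ∈ rowsOf D, (i, j) ∈ S := by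
  constructor
  · intro hj i hi
    exact hD.1.2.1 (clique_prod hD.1 hi hj)
  · intro h
    set C' : Finset (Fin m × Fin n) := D ∪ (rowsOf D ×ˢ {j}) with hC'
    have hCmem : ∀ p : Fin m × Fin n, p ∈ C' ↔ p ∈ D ∨ (p.1 ∈ rowsOf D ∧ p.2 = j) := by
      rintro ⟨p1, p2⟩
      simp only [hC', mem_union, mem_product, mem_singleton, Prod.ext_iff]
    have hgc : IsGridClique S C' := by
      refine ⟨hD.1.1.mono subset_union_left, ?_, ?_⟩
      · intro p hp
        rcases (hCmem p).mp hp with hp | ⟨h1, h2⟩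
        · exact hD.1.2.1 hp
        · have h3 := h p.1 h1; rw [← h2] at h3; simpa using h3
      · intro p hp q hq
        have hp1 : p.1 ∈ rowsOf D := by
          rcases (hCmem p).mp hp with hp | ⟨h1, _⟩
          · exact mem_rowsOf.mpr ⟨p.2, hp⟩
          · exact h1
        rcases (hCmem q).mp hq with hq | ⟨_, h2⟩
        · exact (hCmem _).mpr (Or.inl (clique_prod hD.1 hp1 (mem_colsOf.mpr ⟨q.1, hq⟩)))
        · exact (hCmem _).mpr (Or.inr ⟨hp1, h2⟩)
    have heq : D = C' := hD.2 C' hgc subset_union_left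
    obtain ⟨i₀, hi₀⟩ := rowsOf_nonempty hD.1.1
    have hm : (i₀, j) ∈ C' := (hCmem _).mpr (Or.inr ⟨hi₀, rfl⟩)
    rw [← heq] at hm
    exact mem_colsOf.mpr ⟨i₀, hm⟩

lemma row_mem_iff (hD : IsMaxClique S D) {i : Fin m} :
    i ∈ rowsOf D ↔ ∀ j ∈ colsOf D, (i, j) ∈ S := by
  constructor
  · intro hi j hj
    exact hD.1.2.1 (clique_prod hD.1 hi hj)
  · intro h
    set C' : Finset (Fin m × Fin n) := D ∪ ({i} ×ˢ colsOf D) with hC'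
    have hCmem : ∀ p : Fin m × Fin n, p ∈ C' ↔ p ∈ D ∨ (p.1 = i ∧ p.2 ∈ colsOf D) := by
      rintro ⟨p1, p2⟩
      simp only [hC', mem_union, mem_product, mem_singleton, Prod.ext_iff]
    have hgc : IsGridClique S C' := by
      refine ⟨hD.1.1.mono subset_union_left, ?_, ?_⟩
      · intro p hp
        rcases (hCmem p).mp hp with hp | ⟨h1, h2⟩
        · exact hD.1.2.1 hp
        · have h3 := h p.2 h2; rw [← h1] at h3; simpa using h3
      · intro p hp q hq
        have hq2 : q.2 ∈ colsOf D := by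
          rcases (hCmem q).mp hq with hq | ⟨_, h2⟩
          · exact mem_colsOf.mpr ⟨q.1, hq⟩
          · exact h2
        rcases (hCmem p).mp hp with hp | ⟨h1, _⟩
        · exact (hCmem _).mpr (Or.inl (clique_prod hD.1 (mem_rowsOf.mpr ⟨p.2, hp⟩) hq2))
        · exact (hCmem _).mpr (Or.inr ⟨h1, hq2⟩)
    have heq : D = C' := hD.2 C' hgc subset_union_left
    obtain ⟨j₁, hj₁⟩ := colsOf_nonempty hD.1.1
    have hm : (i, j₁) ∈ C' := (hCmem _).mpr (Or.inr ⟨rfl, hj₁⟩)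
    rw [← heq] at hm
    exact mem_rowsOf.mpr ⟨j₁, hm⟩

lemma eq_of_rowsOf_eq (hD : IsMaxClique S D) (hE : IsMaxClique S E)
    (h : rowsOf D = rowsOf E) : D = E := by
  have hc : colsOf D = colsOf E := by
    ext j; rw [col_mem_iff hD, col_mem_iff hE, h]
  ext ⟨i, j⟩
  rw [mem_clique_iff hD.1, mem_clique_iff hE.1, h, hc]

lemma exists_maxClique (h : IsGridClique S C) : ∃ D, IsMaxClique S D ∧ C ⊆ D := by
  classical
  set T : Finset (Finset (Fin m × Fin n)) :=
    S.powerset.filter (fun D => IsGridClique S D ∧ C ⊆ D) with hT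
  have hCT : C ∈ T := by
    rw [hT, mem_filter, mem_powerset]; exact ⟨h.2.1, h, Finset.Subset.refl C⟩
  obtain ⟨D, hDT, hmax⟩ := Finset.exists_max_image T Finset.card ⟨C, hCT⟩
  rw [hT, mem_filter, mem_powerset] at hDT
  obtain ⟨hDS, hDgc, hCD⟩ := hDT
  refine ⟨D, ⟨hDgc, ?_⟩, hCD⟩
  intro C' hC' hsub
  have hC'T : C' ∈ T := by
    rw [hT, mem_filter, mem_powerset]
    exact ⟨hC'.2.1, hC', hCD.trans hsub⟩
  exact Finset.eq_of_subset_of_card_le hsub (hmax C' hC'T)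

lemma mem_maxCliques : D ∈ maxCliques S ↔ IsMaxClique S D := by
  rw [maxCliques, mem_filter, mem_powerset]
  exact ⟨fun h => h.2, fun h => ⟨h.1.2.1, h⟩⟩

lemma mem_pairInts :
    C ∈ pairInts S ↔ ∃ E F, IsMaxClique S E ∧ IsMaxClique S F ∧ E ≠ F ∧ C = E ∩ F := by
  rw [pairInts]
  simp only [mem_image, mem_filter, mem_product]
  constructor
  · rintro ⟨⟨E, F⟩, ⟨⟨hE, hF⟩, hne⟩, rfl⟩
    exact ⟨E, F, mem_maxCliques.mp hE, mem_maxCliques.mp hF, hne, rfl⟩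
  · rintro ⟨E, F, hE, hF, hne, rfl⟩
    exact ⟨(E, F), ⟨⟨mem_maxCliques.mpr hE, mem_maxCliques.mpr hF⟩, hne⟩, rfl⟩

lemma mem_maxInts :
    C ∈ maxInts S ↔ C ∈ pairInts S ∧ ∀ C' ∈ pairInts S, C ⊆ C' → C = C' := by
  rw [maxInts, mem_filter]

lemma pnode_col (h : PNode S j₀ D) : j₀ ∈ colsOf D := by
  obtain ⟨i, hi⟩ := h.2; exact mem_colsOf.mpr ⟨i, hi⟩

/-- Laminarity: the row sets of two maximal cliques through column `j₀` are
nested or disjoint. -/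
lemma laminar (hS : DoublyChordalBipartite (qiGraph m n S))
    (hα : IsMaxClique S Dα) (hβ : IsMaxClique S Dβ)
    (hjα : j₀ ∈ colsOf Dα) (hjβ : j₀ ∈ colsOf Dβ) :
    rowsOf Dα ⊆ rowsOf Dβ ∨ rowsOf Dβ ⊆ rowsOf Dα ∨
      ∀ i, ¬(i ∈ rowsOf Dα ∧ i ∈ rowsOf Dβ) := by
  by_contra hcon
  push_neg at hcon
  obtain ⟨h1, h2, i₀, hi₀a, hi₀b⟩ := hcon
  obtain ⟨i₁, hi₁a, hi₁b⟩ := not_subset.mp h1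
  obtain ⟨i₂, hi₂b, hi₂a⟩ := not_subset.mp h2
  have hj2 : ∃ j₂ ∈ colsOf Dβ, (i₁, j₂) ∉ S := by
    by_contra hc; push_neg at hc
    exact hi₁b ((row_mem_iff hβ).mpr hc)
  have hj1 : ∃ j₁ ∈ colsOf Dα, (i₂, j₁) ∉ S := by
    by_contra hc; push_neg at hc
    exact hi₂a ((row_mem_iff hα).mpr hc)
  obtain ⟨j₂, hj₂b, h12⟩ := hj2
  obtain ⟨j₁, hj₁a, h21⟩ := hj1
  exact six_cycle_contradiction hS
    (hα.1.2.1 (clique_prod hα.1 hi₁a hjα))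
    (hβ.1.2.1 (clique_prod hβ.1 hi₂b hjβ))
    (hβ.1.2.1 (clique_prod hβ.1 hi₂b hj₂b))
    (hβ.1.2.1 (clique_prod hβ.1 hi₀b hj₂b))
    (hα.1.2.1 (clique_prod hα.1 hi₀a hj₁a))
    (hα.1.2.1 (clique_prod hα.1 hi₁a hj₁a))
    h12 h21

lemma inter_eq_prod (hα : IsMaxClique S Dα) (hβ : IsMaxClique S Dβ)
    (hsub : rowsOf Dα ⊆ rowsOf Dβ) :
    Dα ∩ Dβ = rowsOf Dα ×ˢ colsOf Dβ := by
  ext ⟨i, j⟩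
  rw [mem_inter, mem_clique_iff hα.1, mem_clique_iff hβ.1, mem_product]
  constructor
  · rintro ⟨⟨h1, _⟩, ⟨_, h4⟩⟩; exact ⟨h1, h4⟩
  · rintro ⟨h1, h2⟩
    refine ⟨⟨h1, ?_⟩, hsub h1, h2⟩
    rw [col_mem_iff hα]
    intro i' hi'
    exact (col_mem_iff hβ).mp h2 i' (hsub hi')

lemma cols_antitone (hα : IsMaxClique S Dα) (hβ : IsMaxClique S Dβ)
    (hsub : rowsOf Dα ⊆ rowsOf Dβ) : colsOf Dβ ⊆ colsOf Dα := by
  intro j hj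
  rw [col_mem_iff hα]
  intro i hi
  exact (col_mem_iff hβ).mp hj i (hsub hi)

lemma resolve (hα : PNode S j₀ Dα) (hβ : PNode S j₀ Dβ)
    (hss : rowsOf Dα ⊂ rowsOf Dβ)
    (hnomid : ¬ ∃ Dγ, PNode S j₀ Dγ ∧ rowsOf Dα ⊂ rowsOf Dγ ∧ rowsOf Dγ ⊂ rowsOf Dβ)
    (hE : IsMaxClique S E) (hF : IsMaxClique S F) (hEF : E ≠ F)
    (hEj : j₀ ∈ colsOf E) (hFj : j₀ ∈ colsOf F)
    (h1 : rowsOf E ⊆ rowsOf F) (h2 : rowsOf Dα ⊆ rowsOf E)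
    (h3 : colsOf Dβ ⊆ colsOf F) : E = Dα ∧ F = Dβ := by
  have hEFrows : rowsOf E ≠ rowsOf F := fun h => hEF (eq_of_rowsOf_eq hE hF h)
  have h1s : rowsOf E ⊂ rowsOf F := Finset.ssubset_iff_subset_ne.mpr ⟨h1, hEFrows⟩
  have hFb : rowsOf F ⊆ rowsOf Dβ := by
    intro i hi
    rw [row_mem_iff hβ.1]
    intro j hj
    exact hF.1.2.1 (clique_prod hF.1 hi (h3 hj))
  have hEnode : PNode S j₀ E := by
    obtain ⟨i₀, hi₀⟩ := mem_colsOf.mp hEj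
    exact ⟨hE, i₀, hi₀⟩
  have hFnode : PNode S j₀ F := by
    obtain ⟨i₀, hi₀⟩ := mem_colsOf.mp hFj
    exact ⟨hF, i₀, hi₀⟩
  have hEa : rowsOf E = rowsOf Dα := by
    by_contra hc
    exact hnomid ⟨E, hEnode, Finset.ssubset_iff_subset_ne.mpr ⟨h2, fun h => hc h.symm⟩,
      Finset.ssubset_of_ssubset_of_subset h1s hFb⟩
  have hFb' : rowsOf F = rowsOf Dβ := by
    by_contra hc
    refine hnomid ⟨F, hFnode, ?_, Finset.ssubset_iff_subset_ne.mpr ⟨hFb, hc⟩⟩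
    rw [← hEa]; exact h1s
  exact ⟨eq_of_rowsOf_eq hE hα.1 hEa, eq_of_rowsOf_eq hF hβ.1 hFb'⟩

/-- Main helper: the case `rows(Dα) ⊊ rows(Dβ)`. -/
lemma maxInt_iff_cover_of_ss (hS : DoublyChordalBipartite (qiGraph m n S))
    (hα : PNode S j₀ Dα) (hβ : PNode S j₀ Dβ) (hss : rowsOf Dα ⊂ rowsOf Dβ) :
    Dα ∩ Dβ ∈ maxInts S ↔ PCovers S j₀ Dβ Dα := by
  have hja := pnode_col hα
  have hjb := pnode_col hβ
  have hprod := inter_eq_prod hα.1 hβ.1 hss.subset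
  have hne : Dα ≠ Dβ := fun h => hss.ne (by rw [h])
  constructor
  · -- maxInt ⇒ cover
    intro hmem
    rw [mem_maxInts] at hmem
    refine ⟨hα, hβ, hss, ?_⟩
    rintro ⟨Dγ, hγ, hag, hgb⟩
    have hTbg : colsOf Dβ ⊆ colsOf Dγ := cols_antitone hγ.1 hβ.1 hgb.subset
    have hTstrict : ∃ j, j ∈ colsOf Dγ ∧ j ∉ colsOf Dβ := by
      by_contra hc; push_neg at hc
      have hsub : Dγ ⊆ Dβ := by
        intro ⟨i, j⟩ hij
        rw [mem_clique_iff hγ.1.1] at hij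
        rw [mem_clique_iff hβ.1.1]
        exact ⟨hgb.subset hij.1, hc j hij.2⟩
      have heq := hγ.1.2 Dβ hβ.1.1 hsub
      exact hgb.ne (by rw [heq])
    obtain ⟨j', hj'g, hj'b⟩ := hTstrict
    have hag' : Dα ≠ Dγ := fun h => hag.ne (by rw [h])
    have hprodg := inter_eq_prod hα.1 hγ.1 hag.subset
    have hsub2 : Dα ∩ Dβ ⊆ Dα ∩ Dγ := by
      rw [hprod, hprodg]
      exact Finset.product_subset_product (Finset.Subset.refl _) hTbg
    have hpair : Dα ∩ Dγ ∈ pairInts S :=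
      mem_pairInts.mpr ⟨Dα, Dγ, hα.1, hγ.1, hag', rfl⟩
    have heq := hmem.2 _ hpair hsub2
    obtain ⟨i₀, hi₀⟩ := rowsOf_nonempty hα.1.1.1
    have hmem' : (i₀, j') ∈ Dα ∩ Dγ := by
      rw [hprodg, mem_product]; exact ⟨hi₀, hj'g⟩
    rw [← heq, hprod, mem_product] at hmem'
    exact hj'b hmem'.2
  · -- cover ⇒ maxInt
    rintro ⟨-, -, -, hnomid⟩
    rw [mem_maxInts]
    refine ⟨mem_pairInts.mpr ⟨Dα, Dβ, hα.1, hβ.1, hne, rfl⟩, ?_⟩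
    intro C' hC' hsub
    obtain ⟨E, F, hE, hF, hEF, rfl⟩ := mem_pairInts.mp hC'
    obtain ⟨ia, hia⟩ := rowsOf_nonempty hα.1.1.1
    have key : ∀ i ∈ rowsOf Dα, ∀ j ∈ colsOf Dβ, (i, j) ∈ E ∩ F := by
      intro i hi j hj
      exact hsub (by rw [hprod, mem_product]; exact ⟨hi, hj⟩)
    have hEj : j₀ ∈ colsOf E :=
      mem_colsOf.mpr ⟨ia, (mem_inter.mp (key ia hia j₀ hjb)).1⟩
    have hFj : j₀ ∈ colsOf F :=
      mem_colsOf.mpr ⟨ia, (mem_inter.mp (key ia hia j₀ hjb)).2⟩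
    have hraE : rowsOf Dα ⊆ rowsOf E := fun i hi =>
      mem_rowsOf.mpr ⟨j₀, (mem_inter.mp (key i hi j₀ hjb)).1⟩
    have hraF : rowsOf Dα ⊆ rowsOf F := fun i hi =>
      mem_rowsOf.mpr ⟨j₀, (mem_inter.mp (key i hi j₀ hjb)).2⟩
    have hTbE : colsOf Dβ ⊆ colsOf E := fun j hj =>
      mem_colsOf.mpr ⟨ia, (mem_inter.mp (key ia hia j hj)).1⟩
    have hTbF : colsOf Dβ ⊆ colsOf F := fun j hj =>
      mem_colsOf.mpr ⟨ia, (mem_inter.mp (key ia hia j hj)).2⟩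
    rcases laminar hS hE hF hEj hFj with h | h | h
    · obtain ⟨hEeq, hFeq⟩ := resolve hα hβ hss hnomid hE hF hEF hEj hFj h hraE hTbF
      rw [hEeq, hFeq]
    · obtain ⟨hFeq, hEeq⟩ := resolve hα hβ hss hnomid hF hE hEF.symm hFj hEj h hraF hTbE
      rw [hEeq, hFeq, inter_comm]
    · exact absurd ⟨hraE hia, hraF hia⟩ (h ia)

end Aux

/-- for distinct maximal cliques `Dα`, `Dβ` meeting column `j₀`, the
intersection `Dα ∩ Dβ` is maximal among all pairwise intersections of maximal cliques
iff one of `Dα`, `Dβ` covers the other in the poset `P(j₀)`. -/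
theorem maxInt_iff_cover (m n : ℕ) (S : Finset (Fin m × Fin n))
    (hS : DoublyChordalBipartite (qiGraph m n S)) (j₀ : Fin n)
    (Dα Dβ : Finset (Fin m × Fin n)) (hα : PNode S j₀ Dα) (hβ : PNode S j₀ Dβ)
    (hne : Dα ≠ Dβ) :
    Dα ∩ Dβ ∈ maxInts S ↔ PCovers S j₀ Dβ Dα ∨ PCovers S j₀ Dα Dβ := by
  have hja := pnode_col hα
  have hjb := pnode_col hβ
  rcases laminar hS hα.1 hβ.1 hja hjb with h | h | h
  · have hss : rowsOf Dα ⊂ rowsOf Dβ := Finset.ssubset_iff_subset_ne.mpr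
      ⟨h, fun h' => hne (eq_of_rowsOf_eq hα.1 hβ.1 h')⟩
    rw [maxInt_iff_cover_of_ss hS hα hβ hss]
    constructor
    · exact Or.inl
    · rintro (hc | hc)
      · exact hc
      · exact absurd hss.subset ((Finset.ssubset_def.mp hc.2.2.1).2)
  · have hss : rowsOf Dβ ⊂ rowsOf Dα := Finset.ssubset_iff_subset_ne.mpr
      ⟨h, fun h' => hne (eq_of_rowsOf_eq hα.1 hβ.1 h'.symm)⟩
    rw [inter_comm, maxInt_iff_cover_of_ss hS hβ hα hss]
    constructor
    · exact Or.inr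
    · rintro (hc | hc)
      · exact absurd hss.subset ((Finset.ssubset_def.mp hc.2.2.1).2)
      · exact hc
  · obtain ⟨ia, hia⟩ := rowsOf_nonempty hα.1.1.1
    constructor
    · intro hmem
      exfalso
      rw [mem_maxInts] at hmem
      have hempty : Dα ∩ Dβ = ∅ := by
        rw [Finset.eq_empty_iff_forall_notMem]
        rintro ⟨i, j⟩ hm
        rw [mem_inter] at hm
        exact h i ⟨mem_rowsOf.mpr ⟨j, hm.1⟩, mem_rowsOf.mpr ⟨j, hm.2⟩⟩
      set C₀ : Finset (Fin m × Fin n) :=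
        (rowsOf Dα ∪ rowsOf Dβ) ×ˢ ({j₀} : Finset (Fin n)) with hC₀
      have hgc : IsGridClique S C₀ := by
        refine ⟨⟨(ia, j₀), ?_⟩, ?_, ?_⟩
        · rw [hC₀, mem_product]; exact ⟨mem_union_left _ hia, mem_singleton_self _⟩
        · rintro ⟨i, j⟩ hm
          rw [hC₀, mem_product, mem_singleton] at hm
          obtain ⟨hi, rfl⟩ := hm
          rcases mem_union.mp hi with hi | hi
          · exact hα.1.1.2.1 (clique_prod hα.1.1 hi hja)
          · exact hβ.1.1.2.1 (clique_prod hβ.1.1 hi hjb)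
        · intro p hp q hq
          rw [hC₀, mem_product] at hp hq ⊢
          exact ⟨hp.1, hq.2⟩
      obtain ⟨E, hEmax, hCE⟩ := exists_maxClique hgc
      obtain ⟨ib, hib⟩ := rowsOf_nonempty hβ.1.1.1
      have hibE : ib ∈ rowsOf E := mem_rowsOf.mpr
        ⟨j₀, hCE (by rw [hC₀, mem_product]; exact ⟨mem_union_right _ hib, mem_singleton_self _⟩)⟩
      have hEa : E ≠ Dα := by
        rintro rfl
        exact h ib ⟨hibE, hib⟩
      have hpair : E ∩ Dα ∈ pairInts S :=
        mem_pairInts.mpr ⟨E, Dα, hEmax, hα.1, hEa, rfl⟩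
      have heq := hmem.2 _ hpair (by rw [hempty]; exact Finset.empty_subset _)
      have hmem2 : (ia, j₀) ∈ E ∩ Dα := mem_inter.mpr
        ⟨hCE (by rw [hC₀, mem_product]; exact ⟨mem_union_left _ hia, mem_singleton_self _⟩),
         clique_prod hα.1.1 hia hja⟩
      rw [← heq, hempty] at hmem2
      exact absurd hmem2 (Finset.notMem_empty _)
    · rintro (hc | hc) <;> exfalso
      · exact h ia ⟨hia, (Finset.ssubset_def.mp hc.2.2.1).1 hia⟩
      · obtain ⟨ib, hib⟩ := rowsOf_nonempty hβ.1.1.1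
        exact h ib ⟨(Finset.ssubset_def.mp hc.2.2.1).1 hib, hib⟩
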